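/- Let δ be an approach distance on X and let a : U X ⇸ X be its ultrafilter convergence, a 𝔵 x = ⨆_{A ∈ 𝔵} δ A x. Then (1) a is reflexive: a (e_X x) x = 0 for all x ∈ X; (2) a is transitive: Ū a 𝔛 𝔵 + a 𝔵 x ≥ a (m_X 𝔛) x for all 𝔛 ∈ U(U X), 𝔵 ∈ U X, x ∈ X; and (3) δ is recovered from a: δ A x = ⨅_{𝔵 ∈ U X, A ∈ 𝔵} a 𝔵 x for all A ⊆ X and x ∈ X. -/

import Mathlib

open scoped ENNReal
open CategoryTheory

noncomputable section

/-- The extension `Ū r` of a numerical relation `r : X ⇸ Y` to ultrafilters: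
`Ū r (𝔵, 𝔶) = ⨆_{A ∈ 𝔵} ⨆_{B ∈ 𝔶} ⨅_{x ∈ A} ⨅_{y ∈ B} r x y`. -/
def uExt {X Y : Type*} (r : X → Y → ℝ≥0∞) (𝔵 : Ultrafilter X) (𝔶 : Ultrafilter Y) : ℝ≥0∞ :=
  ⨆ A ∈ 𝔵, ⨆ B ∈ 𝔶, ⨅ x ∈ A, ⨅ y ∈ B, r x y

/-- The multiplication `m_X : U (U X) → U X` of the ultrafilter monad:
`m_X 𝔛 = {A ⊆ X | {𝔞 ∈ U X | A ∈ 𝔞} ∈ 𝔛}`. -/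
def mU {X : Type*} (𝔛 : Ultrafilter (Ultrafilter X)) : Ultrafilter X :=
  𝔛.bind id

/-- `ξ : U [0,∞] → [0,∞]`, `ξ 𝔳 = ⨆_{A ∈ 𝔳} ⨅_{u ∈ A} u`. -/
def xi (𝔳 : Ultrafilter ℝ≥0∞) : ℝ≥0∞ :=
  ⨆ A ∈ 𝔳, ⨅ u ∈ A, u

/-- `δ : P X × X → [0,∞]` is an approach distance. -/
structure IsApproachDistance {X : Type*} (δ : Set X → X → ℝ≥0∞) : Prop where
  dist_singleton : ∀ x : X, δ {x} x = 0
  dist_empty : ∀ x : X, δ (∅ : Set X) x = ∞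
  dist_union : ∀ (A B : Set X) (x : X), δ (A ∪ B) x = min (δ A x) (δ B x)
  dist_closure : ∀ (A : Set X) (x : X) (ε : ℝ≥0∞), δ A x ≤ δ {y | δ A y ≤ ε} x + ε

/-- The ultrafilter convergence associated to a distance function `δ`:
`a 𝔵 x = ⨆_{A ∈ 𝔵} δ A x`. -/
def appConv {X : Type*} (δ : Set X → X → ℝ≥0∞) (𝔵 : Ultrafilter X) (x : X) : ℝ≥0∞ :=
  ⨆ A ∈ 𝔵, δ A x

/-- `f : X → Y` is a contraction with respect to convergences `a` and `b`:
`a 𝔵 x ≥ b (U f 𝔵) (f x)`. -/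
def IsContraction {X Y : Type*} (a : Ultrafilter X → X → ℝ≥0∞)
    (b : Ultrafilter Y → Y → ℝ≥0∞) (f : X → Y) : Prop :=
  ∀ (𝔵 : Ultrafilter X) (x : X), b (Ultrafilter.map f 𝔵) (f x) ≤ a 𝔵 x

/-! Transitivity: if `A ∈ m_X 𝔛` and `ε > Ū a (𝔛, 𝔵)`, the neighbourhood `{y | δ A y ≤ ε}` must
lie in `𝔵` (otherwise its complement and `{𝔞 | A ∈ 𝔞} ∈ 𝔛` would witness `Ū a (𝔛, 𝔵) ≥ ε`), so
the closure axiom gives `δ A x ≤ a 𝔵 x + ε`.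
Recovery: the sets `T` with `δ A x < δ (A ∩ T) x` form an ideal (by the union axiom); an
ultrafilter finer than its dual filter contains `A`, and each of its members `S` satisfies
`δ S x ≤ δ A x`, since otherwise `Sᶜ` would be in that dual filter. -/

lemma mem_mU {X : Type*} {𝔛 : Ultrafilter (Ultrafilter X)} {A : Set X} :
    A ∈ mU 𝔛 ↔ {𝔞 : Ultrafilter X | A ∈ 𝔞} ∈ 𝔛 :=
  Iff.rfl

lemma le_appConv {X : Type*} (δ : Set X → X → ℝ≥0∞) {𝔵 : Ultrafilter X} {A : Set X}
    (hA : A ∈ 𝔵) (x : X) : δ A x ≤ appConv δ 𝔵 x :=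
  le_iSup₂ (f := fun A (_ : A ∈ 𝔵) => δ A x) A hA

lemma setOf_le_mem_of_uExt_appConv_lt {X : Type*} (δ : Set X → X → ℝ≥0∞)
    {𝔛 : Ultrafilter (Ultrafilter X)} {𝔵 : Ultrafilter X} {A : Set X} (hA : A ∈ mU 𝔛)
    {ε : ℝ≥0∞} (hε : uExt (appConv δ) 𝔛 𝔵 < ε) : {y | δ A y ≤ ε} ∈ 𝔵 := by
  unfold uExt at hε
  by_contra hnot
  have hfar : {y | δ A y ≤ ε}ᶜ ∈ 𝔵 := Ultrafilter.compl_mem_iff_notMem.2 hnot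
  have hinf_lt : ⨅ 𝔞 ∈ {𝔞 : Ultrafilter X | A ∈ 𝔞}, ⨅ y ∈ {y | δ A y ≤ ε}ᶜ, appConv δ 𝔞 y < ε :=
    hε.trans_le' <| le_iSup₂_of_le _ (mem_mU.1 hA) <| le_iSup₂_of_le _ hfar le_rfl
  simp only [iInf_lt_iff] at hinf_lt
  obtain ⟨𝔞, hA𝔞, y, hy, hlt⟩ := hinf_lt
  exact hy ((le_appConv δ hA𝔞 y).trans hlt.le)

namespace IsApproachDistance

variable {X : Type*} {δ : Set X → X → ℝ≥0∞}

lemma antitone (hδ : IsApproachDistance δ) {S T : Set X} (h : S ⊆ T) (x : X) :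
    δ T x ≤ δ S x := by
  rw [← Set.union_eq_self_of_subset_left h, hδ.dist_union]
  exact min_le_left _ _

lemma appConv_pure_self (hδ : IsApproachDistance δ) (x : X) :
    appConv δ (pure x) x = 0 :=
  nonpos_iff_eq_zero.1 <| iSup₂_le fun _ hA =>
    (hδ.antitone (Set.singleton_subset_iff.2 (Ultrafilter.mem_pure.1 hA)) x).trans
      (hδ.dist_singleton x).le

lemma appConv_mU_le (hδ : IsApproachDistance δ) (𝔛 : Ultrafilter (Ultrafilter X))
    (𝔵 : Ultrafilter X) (x : X) :
    appConv δ (mU 𝔛) x ≤ uExt (appConv δ) 𝔛 𝔵 + appConv δ 𝔵 x := by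
  refine iSup₂_le fun A hA => ?_
  rw [add_comm, ← tsub_le_iff_left]
  refine le_of_forall_gt_imp_ge_of_dense fun ε hε => tsub_le_iff_left.2 ?_
  calc δ A x ≤ δ {y | δ A y ≤ ε} x + ε := hδ.dist_closure A x ε
    _ ≤ appConv δ 𝔵 x + ε := by
      gcongr
      exact le_appConv δ (setOf_le_mem_of_uExt_appConv_lt δ hA hε) x

lemma exists_ultrafilter_appConv_le (hδ : IsApproachDistance δ) {A : Set X} {x : X}
    (hA : δ A x ≠ ∞) : ∃ 𝔵 : Ultrafilter X, A ∈ 𝔵 ∧ appConv δ 𝔵 x ≤ δ A x := by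
  let far : Filter X := Filter.comk (fun T => δ A x < δ (A ∩ T) x)
    (by rwa [Set.inter_empty, hδ.dist_empty, lt_top_iff_ne_top])
    (fun _ ht _ hst => ht.trans_le (hδ.antitone (Set.inter_subset_inter_right A hst) x))
    (fun _ hs _ ht => by rw [Set.inter_union_distrib_left, hδ.dist_union]; exact lt_min hs ht)
  have hA_far : A ∈ far := by
    rw [Filter.mem_comk, Set.inter_compl_self, hδ.dist_empty, lt_top_iff_ne_top]
    exact hA
  have : far.NeBot := Filter.neBot_iff.2 fun hbot => by
    have := Filter.mem_comk.1 (hbot ▸ Filter.mem_bot : (∅ : Set X) ∈ far)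
    rw [Set.compl_empty, Set.inter_univ] at this
    exact this.false
  refine ⟨Ultrafilter.of far, Ultrafilter.of_le far hA_far, iSup₂_le fun S hS => ?_⟩
  by_contra! hlt
  have hSc : Sᶜ ∈ far := by
    rw [Filter.mem_comk, compl_compl]
    exact hlt.trans_le (hδ.antitone Set.inter_subset_right x)
  exact Ultrafilter.compl_notMem_iff.2 hS (Ultrafilter.of_le far hSc)

lemma iInf_appConv_eq (hδ : IsApproachDistance δ) (A : Set X) (x : X) :
    ⨅ (𝔵 : Ultrafilter X) (_ : A ∈ 𝔵), appConv δ 𝔵 x = δ A x := by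
  refine le_antisymm ?_ (le_iInf₂ fun 𝔵 hA => le_appConv δ hA x)
  rcases eq_or_ne (δ A x) ∞ with htop | hA
  · exact htop ▸ le_top
  obtain ⟨𝔵, hA𝔵, hle⟩ := hδ.exists_ultrafilter_appConv_le hA
  exact iInf₂_le_of_le 𝔵 hA𝔵 hle

end IsApproachDistance

/-- The ultrafilter convergence `a 𝔵 x = ⨆_{A ∈ 𝔵} δ A x` of an approach
distance `δ` is reflexive and transitive, and `δ` is recovered from `a` by
`δ A x = ⨅_{𝔵 ∈ U X, A ∈ 𝔵} a 𝔵 x`. -/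
theorem appConv_reflexive_transitive_recovers (X : Type*) (δ : Set X → X → ℝ≥0∞)
    (hδ : IsApproachDistance δ)
    (a : Ultrafilter X → X → ℝ≥0∞)
    (ha : ∀ (𝔵 : Ultrafilter X) (x : X), a 𝔵 x = ⨆ A ∈ 𝔵, δ A x) :
    (∀ x : X, a (pure x : Ultrafilter X) x = 0) ∧
    (∀ (𝔛 : Ultrafilter (Ultrafilter X)) (𝔵 : Ultrafilter X) (x : X),
      a (mU 𝔛) x ≤ uExt a 𝔛 𝔵 + a 𝔵 x) ∧
    (∀ (A : Set X) (x : X), δ A x = ⨅ (𝔵 : Ultrafilter X) (_ : A ∈ 𝔵), a 𝔵 x) := by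
  obtain rfl : a = appConv δ := funext fun 𝔵 => funext (ha 𝔵)
  exact ⟨hδ.appConv_pure_self, hδ.appConv_mU_le, fun A x => (hδ.iInf_appConv_eq A x).symm⟩

end
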